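/- Let n ≥ 2 and m = 3n-2. The subspace of W consisting of all relations satisfied by the generators (G1) = [[[x_1,…,x_n],y_1,…,y_{n-1}],z_1,…,z_{n-1}] and (G2) = [[x_1,…,x_n],[y_1,…,y_n],z_1,…,z_{n-2}] is spanned by the following elements, for all choices of letters and permutations: (G1) − sign(σ)[[[x_{σ(1)},…,x_{σ(n)}],y_1,…,y_{n-1}],z_1,…,z_{n-1}] for σ ∈ S_n; (G1) − sign(τ)[[[x_1,…,x_n],y_{τ(1)},…,y_{τ(n-1)}],z_1,…,z_{n-1}] for τ ∈ S_{n-1}; (G1) − sign(τ)[[[x_1,…,x_n],y_1,…,y_{n-1}],z_{τ(1)},…,z_{τ(n-1)}] for τ ∈ S_{n-1}; (G2) − sign(σ)[[x_{σ(1)},…,x_{σ(n)}],[y_1,…,y_n],z_1,…,z_{n-2}] for σ ∈ S_n; (G2) − sign(σ)[[x_1,…,x_n],[y_{σ(1)},…,y_{σ(n)}],z_1,…,z_{n-2}] for σ ∈ S_n; (G2) − sign(τ)[[x_1,…,x_n],[y_1,…,y_n],z_{τ(1)},…,z_{τ(n-2)}] for τ ∈ S_{n-2}; and (G2) + [[y_1,…,y_n],[x_1,…,x_n],z_1,…,z_{n-2}].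 -/

import Mathlib

namespace LAnKe

/-- Prepend an element to a tuple of length `n - 1`, obtaining a tuple of length `n`. -/
def consF {α : Type} {n : ℕ} (a : α) (v : Fin (n - 1) → α) : Fin n → α := fun i =>
  if h : (i : ℕ) = 0 then a else v ⟨(i : ℕ) - 1, by omega⟩

/-- Prepend two elements to a tuple of length `n - 2`, obtaining a tuple of length `n`. -/
def cons2F {α : Type} {n : ℕ} (a b : α) (v : Fin (n - 2) → α) : Fin n → α := fun i =>
  if h : (i : ℕ) = 0 then a else if h2 : (i : ℕ) = 1 then b else v ⟨(i : ℕ) - 2, by omega⟩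

/-- The tuple obtained from `v : Fin a → α` by omitting the `i`-th entry (a "hat"). -/
def omitF {α : Type} {a : ℕ} (v : Fin a → α) (i : Fin a) : Fin (a - 1) → α := fun k =>
  if h : (k : ℕ) < (i : ℕ) then v ⟨(k : ℕ), by omega⟩ else v ⟨(k : ℕ) + 1, by omega⟩

variable (K : Type) [Field K] {n : ℕ} {L : Type} [AddCommGroup L] [Module K L]

/-- `[a, y₁, …, y_{n-1}]`: the bracket applied to `a` followed by the `n-1` entries of `y`. -/
def app1 (br : AlternatingMap K L L (Fin n)) (a : L) (y : Fin (n - 1) → L) : L :=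
  br (consF a y)

/-- `[a, b, z₁, …, z_{n-2}]`. -/
def app2 (br : AlternatingMap K L L (Fin n)) (a b : L) (z : Fin (n - 2) → L) : L :=
  br (cons2F a b z)

/-- The bracketed word `[[[x₁,…,x_n], y₁,…,y_{n-1}], z₁,…,z_{n-1}]` (a word of type (G1)). -/
def w1 (br : AlternatingMap K L L (Fin n)) (x : Fin n → L) (y z : Fin (n - 1) → L) : L :=
  app1 K br (app1 K br (br x) y) z

/-- The bracketed word `[[x₁,…,x_n], [y₁,…,y_n], z₁,…,z_{n-2}]` (a word of type (G2)). -/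
def w2 (br : AlternatingMap K L L (Fin n)) (x y : Fin n → L) (z : Fin (n - 2) → L) : L :=
  app2 K br (br x) (br y) z

/-- The generalized Jacobi identity for an alternating `n`-ary bracket:
`[[x₁,…,x_n],y₁,…,y_{n-1}] = ∑ᵢ [x₁,…,x_{i-1},[x_i,y₁,…,y_{n-1}],x_{i+1},…,x_n]`. -/
def GJId (br : AlternatingMap K L L (Fin n)) : Prop :=
  ∀ (x : Fin n → L) (y : Fin (n - 1) → L),
    app1 K br (br x) y = ∑ i : Fin n, br (Function.update x i (app1 K br (x i) y))

/-- A linear map commuting with the (alternating `n`-ary) brackets. -/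
def IsBracketHom {L' : Type} [AddCommGroup L'] [Module K L']
    (br : AlternatingMap K L L (Fin n)) (br' : AlternatingMap K L' L' (Fin n))
    (F : L →ₗ[K] L') : Prop :=
  ∀ x : Fin n → L, F (br x) = br' (fun i => F (x i))

/-- `(L, br, ι)` is a free LAnKe (free Filippov algebra) on the set `X`: the bracket is
alternating (hence antisymmetric, as `char K = 0`), satisfies the generalized Jacobi
identity, and every map from `X` to a LAnKe extends uniquely to a bracket-preserving
linear map. -/
def IsFreeLAnKe {X : Type} (br : AlternatingMap K L L (Fin n)) (ι : X → L) : Prop :=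
  GJId K br ∧
    ∀ (L' : Type) [AddCommGroup L'] [Module K L'],
      ∀ (br' : AlternatingMap K L' L' (Fin n)), GJId K br' →
        ∀ f : X → L', ∃! F : L →ₗ[K] L', IsBracketHom K br br' F ∧ ∀ i, F (ι i) = f i

/-- `(A, br, ι)` is a free anticommutative `n`-ary algebra on the set `X`: the bracket is
alternating, and every map from `X` to an algebra with an alternating `n`-ary bracket
extends uniquely to a bracket-preserving linear map.  (The "bracketed words subject only to
antisymmetry" of the paper live inside such an algebra.) -/
def IsFreeAnti {X : Type} (br : AlternatingMap K L L (Fin n)) (ι : X → L) : Prop :=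
  ∀ (L' : Type) [AddCommGroup L'] [Module K L'],
    ∀ (br' : AlternatingMap K L' L' (Fin n)),
      ∀ f : X → L', ∃! F : L →ₗ[K] L', IsBracketHom K br br' F ∧ ∀ i, F (ι i) = f i

variable (m : ℕ)

/-- The letters `x, y, z` of a bracketed permutation of type (G1): jointly they are
pairwise distinct (with `m = 3n-2` this means each letter of `[m]` occurs exactly once). -/
def ValidG1 (x : Fin n → Fin m) (y z : Fin (n - 1) → Fin m) : Prop :=
  Function.Injective (Sum.elim x (Sum.elim y z))

/-- The letters `x, y, z` of a bracketed permutation of type (G2): jointly distinct. -/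
def ValidG2 (x y : Fin n → Fin m) (z : Fin (n - 2) → Fin m) : Prop :=
  Function.Injective (Sum.elim x (Sum.elim y z))

variable {m}

/-- The word `(G1) = [[[x₁,…,x_n],y₁,…,y_{n-1}],z₁,…,z_{n-1}]` on letters `ι ∘ x` etc. -/
def wG1 (br : AlternatingMap K L L (Fin n)) (ι : Fin m → L) (x : Fin n → Fin m)
    (y z : Fin (n - 1) → Fin m) : L :=
  w1 K br (ι ∘ x) (ι ∘ y) (ι ∘ z)

/-- The word `(G2) = [[x₁,…,x_n],[y₁,…,y_n],z₁,…,z_{n-2}]` on letters `ι ∘ x` etc. -/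
def wG2 (br : AlternatingMap K L L (Fin n)) (ι : Fin m → L) (x y : Fin n → Fin m)
    (z : Fin (n - 2) → Fin m) : L :=
  w2 K br (ι ∘ x) (ι ∘ y) (ι ∘ z)

/-- The set of all bracketed permutations of type (G1). -/
def G1Words (br : AlternatingMap K L L (Fin n)) (ι : Fin m → L) : Set L :=
  {l | ∃ x y z, ValidG1 m x y z ∧ l = wG1 K br ι x y z}

/-- The set of all bracketed permutations of type (G2). -/
def G2Words (br : AlternatingMap K L L (Fin n)) (ι : Fin m → L) : Set L :=
  {l | ∃ x y z, ValidG2 m x y z ∧ l = wG2 K br ι x y z}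

/-- The multilinear component: the span of all bracketed permutations (with three
brackets) on `[m]`.  For the free LAnKe this is `Lie_n(m)`; for the free anticommutative
algebra this is the space `W = W_{n,3}` of the paper. -/
def LieComp (br : AlternatingMap K L L (Fin n)) (ι : Fin m → L) : Submodule K L :=
  Submodule.span K (G1Words K br ι ∪ G2Words K br ι)

/-- `W(1)`: the span of the bracketed permutations of type (G1) (this set is stable under
the `S_m`-action, so this is the `S_m`-submodule generated by the (G1)'s). -/
def W1Comp (br : AlternatingMap K L L (Fin n)) (ι : Fin m → L) : Submodule K L :=
  Submodule.span K (G1Words K br ι)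

/-- The relator
`(R1) = (G1) - ∑_{i=1}^{n} (-1)^{i-1} [[[x_i,y₁,…,y_{n-1}],x₁,…,x̂_i,…,x_n],z₁,…,z_{n-1}]`. -/
def R1elt (br : AlternatingMap K L L (Fin n)) (ι : Fin m → L) (x : Fin n → Fin m)
    (y z : Fin (n - 1) → Fin m) : L :=
  wG1 K br ι x y z -
    ∑ i : Fin n, ((-1 : K)) ^ (i : ℕ) •
      w1 K br (consF (ι (x i)) (ι ∘ y)) (ι ∘ omitF x i) (ι ∘ z)

/-- The relator `(R2) = (G1) - [[[x],z],y] - ∑_{i=1}^{n-1} (-1)^{i-1}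
[[x₁,…,x_n],[y_i,z₁,…,z_{n-1}],y₁,…,ŷ_i,…,y_{n-1}]`. -/
def R2elt (br : AlternatingMap K L L (Fin n)) (ι : Fin m → L) (x : Fin n → Fin m)
    (y z : Fin (n - 1) → Fin m) : L :=
  wG1 K br ι x y z - wG1 K br ι x z y -
    ∑ i : Fin (n - 1), ((-1 : K)) ^ (i : ℕ) •
      w2 K br (ι ∘ x) (consF (ι (y i)) (ι ∘ z)) (ι ∘ omitF y i)

/-- The relator `(R3) = (G2) - ∑_{i=1}^{n} (-1)^{i}
[[[y₁,…,y_n],x_i,z₁,…,z_{n-2}],x₁,…,x̂_i,…,x_n]`. -/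
def R3elt (br : AlternatingMap K L L (Fin n)) (ι : Fin m → L) (x y : Fin n → Fin m)
    (z : Fin (n - 2) → Fin m) : L :=
  wG2 K br ι x y z -
    ∑ i : Fin n, ((-1 : K)) ^ ((i : ℕ) + 1) •
      app1 K br (app2 K br (br (ι ∘ y)) (ι (x i)) (ι ∘ z)) (ι ∘ omitF x i)

/-- The relator `(R4) = (G1) - [[[x],z],y] - ∑_{i=1}^{n-1} (-1)^{i-1} ∑_{j=1}^{n} (-1)^{j}
[[[y_i,z₁,…,z_{n-1}],x_j,y₁,…,ŷ_i,…,y_{n-1}],x₁,…,x̂_j,…,x_n]`. -/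
def R4elt (br : AlternatingMap K L L (Fin n)) (ι : Fin m → L) (x : Fin n → Fin m)
    (y z : Fin (n - 1) → Fin m) : L :=
  wG1 K br ι x y z - wG1 K br ι x z y -
    ∑ i : Fin (n - 1), ∑ j : Fin n,
      (((-1 : K)) ^ (i : ℕ) * ((-1 : K)) ^ ((j : ℕ) + 1)) •
        app1 K br
          (app2 K br (br (consF (ι (y i)) (ι ∘ z))) (ι (x j)) (ι ∘ omitF y i))
          (ι ∘ omitF x j)

/-- The relator `(R5) = ∑_{i=1}^{n} [[[x₁,…,x_n],y_i,z₁,…,z_{n-2}],y₁,…,ŷ_i,…,y_n]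
+ ∑_{i=1}^{n} [[[y₁,…,y_n],x_i,z₁,…,z_{n-2}],x₁,…,x̂_i,…,x_n]`. -/
def R5elt (br : AlternatingMap K L L (Fin n)) (ι : Fin m → L) (x y : Fin n → Fin m)
    (z : Fin (n - 2) → Fin m) : L :=
  (∑ i : Fin n,
      app1 K br (app2 K br (br (ι ∘ x)) (ι (y i)) (ι ∘ z)) (ι ∘ omitF y i)) +
    ∑ i : Fin n,
      app1 K br (app2 K br (br (ι ∘ y)) (ι (x i)) (ι ∘ z)) (ι ∘ omitF x i)

/-- The set of all relators (R1). -/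
def R1Set (br : AlternatingMap K L L (Fin n)) (ι : Fin m → L) : Set L :=
  {l | ∃ x y z, ValidG1 m x y z ∧ l = R1elt K br ι x y z}

/-- The set of all relators (R2). -/
def R2Set (br : AlternatingMap K L L (Fin n)) (ι : Fin m → L) : Set L :=
  {l | ∃ x y z, ValidG1 m x y z ∧ l = R2elt K br ι x y z}

/-- The set of all relators (R3). -/
def R3Set (br : AlternatingMap K L L (Fin n)) (ι : Fin m → L) : Set L :=
  {l | ∃ x y z, ValidG2 m x y z ∧ l = R3elt K br ι x y z}

/-- The set of all relators (R4). -/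
def R4Set (br : AlternatingMap K L L (Fin n)) (ι : Fin m → L) : Set L :=
  {l | ∃ x y z, ValidG1 m x y z ∧ l = R4elt K br ι x y z}

/-- The set of all relators (R5). -/
def R5Set (br : AlternatingMap K L L (Fin n)) (ι : Fin m → L) : Set L :=
  {l | ∃ x y z, ValidG2 m x y z ∧ l = R5elt K br ι x y z}

end LAnKe
namespace LAnKe

/-- The data of a bracketed permutation of type
`(G1) = [[[x₁,…,x_n],y₁,…,y_{n-1}],z₁,…,z_{n-1}]` on `[m]`. -/
structure G1D (n m : ℕ) where
  x : Fin n → Fin m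
  y : Fin (n - 1) → Fin m
  z : Fin (n - 1) → Fin m
  valid : ValidG1 m x y z

/-- The data of a bracketed permutation of type
`(G2) = [[x₁,…,x_n],[y₁,…,y_n],z₁,…,z_{n-2}]` on `[m]`. -/
structure G2D (n m : ℕ) where
  x : Fin n → Fin m
  y : Fin n → Fin m
  z : Fin (n - 2) → Fin m
  valid : ValidG2 m x y z

/-- The generators of `W`: bracketed permutations of the two types. -/
def GenT (n m : ℕ) : Type := G1D n m ⊕ G2D n m

variable (K : Type) [Field K] {n m : ℕ} {A : Type} [AddCommGroup A] [Module K A]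

/-- Interpretation of a generator as a bracketed word of the free anticommutative
`n`-ary algebra. -/
def interp (br : AlternatingMap K A A (Fin n)) (ι : Fin m → A) : GenT n m → A
  | Sum.inl d => wG1 K br ι d.x d.y d.z
  | Sum.inr d => wG2 K br ι d.x d.y d.z

/-- The canonical map from the free vector space on the generators to `W`;
its kernel is the space of relations satisfied by the generators. -/
noncomputable def toW (br : AlternatingMap K A A (Fin n)) (ι : Fin m → A) :
    (GenT n m →₀ K) →ₗ[K] A :=
  Finsupp.linearCombination K (interp K br ι)

end LAnKe

/-!
The seven families lie in the kernel because the bracket is alternating. Conversely, let `Q` be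
the quotient of the free vector space on the generators by their span. We build an explicit
module `Model` with an alternating `n`-ary bracket and letters, together with a linear map
`topPart : Model → Q` sending the word of every generator `g` to the class of `g`. By freeness,
`toW` followed by the induced map `A → Model` and by `topPart` is the quotient map onto `Q`, so
the kernel of `toW` lies in the span of the relators.

Each coordinate of a bracket in `Model` is a determinant of coordinate functionals evaluated on
its arguments (`pairingDet`). Hence the coefficient of the word of `g` along the rows of a
generator `g'` is the product of the signs of the permutations relating the letter blocks of
`g` and `g'`, and `0` when the letter sets differ. The top part keeps one representative per
class of letter sets, and the relators identify `g` with exactly that signed multiple of its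
representative.
-/

section PairingDet

variable {K M : Type*} [CommRing K] [AddCommGroup M] [Module K M] {r : ℕ}

def pairingDet (φ : Fin r → M →ₗ[K] K) : M [⋀^Fin r]→ₗ[K] K :=
  Matrix.detRowAlternating.compLinearMap (LinearMap.pi φ)

theorem pairingDet_apply (φ : Fin r → M →ₗ[K] K) (v : Fin r → M) :
    pairingDet φ v = (Matrix.of fun i j => φ i (v j)).det := by
  rw [← Matrix.det_transpose]
  rfl

theorem pairingDet_eq_zero_of_row (φ : Fin r → M →ₗ[K] K) (v : Fin r → M) (i : Fin r)
    (h : ∀ j, φ i (v j) = 0) : pairingDet φ v = 0 := by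
  rw [pairingDet_apply]
  exact Matrix.det_eq_zero_of_row_eq_zero i h

theorem pairingDet_eq_zero_of_col (φ : Fin r → M →ₗ[K] K) (v : Fin r → M) (j : Fin r)
    (h : ∀ i, φ i (v j) = 0) : pairingDet φ v = 0 := by
  rw [pairingDet_apply]
  exact Matrix.det_eq_zero_of_column_eq_zero j h

theorem pairingDet_cons_cons (φ₀ : M →ₗ[K] K) (φ : Fin r → M →ₗ[K] K) (v₀ : M)
    (v : Fin r → M) (h : ∀ j, φ₀ (v j) = 0) :
    pairingDet (Fin.cons φ₀ φ) (Fin.cons v₀ v) = φ₀ v₀ * pairingDet φ v := by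
  rw [pairingDet_apply, Matrix.det_succ_row_zero, Fin.sum_univ_succ, pairingDet_apply]
  simp [h, Matrix.submatrix]

theorem pairingDet_cons_cons_cons_cons (φ₀ φ₁ : M →ₗ[K] K) (φ : Fin r → M →ₗ[K] K)
    (v₀ v₁ : M) (v : Fin r → M) (h₀ : ∀ j, φ₀ (v j) = 0)
    (h₁ : ∀ j, φ₁ (v j) = 0) :
    pairingDet (Fin.cons φ₀ (Fin.cons φ₁ φ)) (Fin.cons v₀ (Fin.cons v₁ v)) =
      (φ₀ v₀ * φ₁ v₁ - φ₀ v₁ * φ₁ v₀) * pairingDet φ v := by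
  -- Laplace expansion along the first row, whose entries vanish beyond the first two.
  rw [pairingDet_apply, Matrix.det_succ_row_zero, Fin.sum_univ_succ, Fin.sum_univ_succ]
  have hv : ∀ j, (Fin.cons v₀ (Fin.cons v₁ v) : Fin (r + 2) → M) (Fin.succAbove 1 j) =
      (Fin.cons v₀ v : Fin (r + 1) → M) j := by
    intro j
    refine Fin.cases ?_ (fun j => ?_) j <;> rfl
  have e₀ := pairingDet_cons_cons φ₁ φ v₁ v h₁
  have e₁ := pairingDet_cons_cons φ₁ φ v₀ v h₁
  rw [pairingDet_apply, pairingDet_apply] at e₀ e₁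
  simp [h₀, Matrix.submatrix, hv, e₀, e₁, pairingDet_apply]
  ring

end PairingDet

theorem AlternatingMap.map_perm_eq_sign_smul {K M N ι : Type*} [CommRing K] [AddCommGroup M]
    [Module K M] [AddCommGroup N] [Module K N] [Fintype ι] [DecidableEq ι]
    (f : M [⋀^ι]→ₗ[K] N) (v : ι → M) (σ : Equiv.Perm ι) :
    f (v ∘ σ) = ((Equiv.Perm.sign σ : ℤ) : K) • f v := by
  rw [f.map_perm, Units.smul_def, Int.cast_smul_eq_zsmul]

section Incidence

open Function Set

theorem exists_perm_of_range_eq {α : Type*} {r : ℕ} {a x : Fin r → α} (hx : Injective x)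
    (h : range a = range x) : ∃ σ : Equiv.Perm (Fin r), a = x ∘ σ := by
  choose g hg using fun i => h.subset (mem_range_self i)
  have hg_surj : Surjective g := by
    intro j
    obtain ⟨i, hi⟩ := h.superset (mem_range_self j)
    exact ⟨i, hx (by rw [hg, hi])⟩
  exact ⟨Equiv.ofBijective g ⟨Finite.injective_iff_surjective.2 hg_surj, hg_surj⟩,
    funext fun i => (hg i).symm⟩

variable (K : Type*) [CommRing K] {α : Type*} [DecidableEq α] {r : ℕ}

def incidenceDet (a x : Fin r → α) : K :=
  (Matrix.of fun i j => if a i = x j then (1 : K) else 0).det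

variable {K}

theorem incidenceDet_comp_perm {x : Fin r → α} (hx : Injective x) (σ : Equiv.Perm (Fin r)) :
    incidenceDet K (x ∘ σ) x = Equiv.Perm.sign σ := by
  rw [incidenceDet, ← Matrix.det_permutation σ]
  congr
  ext i j
  simp [hx.eq_iff]

theorem range_eq_of_incidenceDet_ne_zero {a x : Fin r → α} (h : incidenceDet K a x ≠ 0) :
    range a = range x := by
  have hmem : ∀ i, ∃ j, a i = x j := by
    intro i
    by_contra hi
    push Not at hi
    exact h (Matrix.det_eq_zero_of_row_eq_zero i fun j => by simp [hi j])
  choose g hg using hmem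
  have hg_inj : Injective g := by
    intro i i' he
    by_contra hne
    exact h (Matrix.det_zero_of_row_eq hne (by ext j; simp [hg, he]))
  rw [show a = x ∘ g from funext hg, (Finite.injective_iff_surjective.1 hg_inj).range_comp]

end Incidence

theorem Function.Injective.sumElim_comp_perm {α β γ δ : Type*} {x : α → δ} {y : β → δ}
    {z : γ → δ} (h : Function.Injective (Sum.elim x (Sum.elim y z))) (σ : Equiv.Perm α)
    (τ : Equiv.Perm β) (ρ : Equiv.Perm γ) :
    Function.Injective (Sum.elim (x ∘ σ) (Sum.elim (y ∘ τ) (z ∘ ρ))) := by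
  rw [← Sum.elim_comp_map, ← Sum.elim_comp_map]
  exact h.comp (σ.injective.sumMap (τ.injective.sumMap ρ.injective))

theorem Function.Injective.sumElim_swap {α β γ δ : Type*} {x : α → δ} {y : β → δ}
    {z : γ → δ} (h : Function.Injective (Sum.elim x (Sum.elim y z))) :
    Function.Injective (Sum.elim y (Sum.elim x z)) := by
  simp only [Sum.elim_injective, Sum.forall, Sum.elim_inl, Sum.elim_inr, forall_and] at h ⊢
  obtain ⟨hx, ⟨hy, hz, hyz⟩, hxy, hxz⟩ := h
  exact ⟨hy, ⟨hx, hz, hxz⟩, fun a b => (hxy b a).symm, hyz⟩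

namespace LAnKe

open Equiv Function Set

section Tuples

variable {α β : Type} {r : ℕ}

theorem consF_eq_cons (a : α) (v : Fin r → α) :
    (consF a v : Fin (r + 1) → α) = Fin.cons a v := by
  funext i
  refine Fin.cases ?_ (fun j => ?_) i
  · simp [consF]
  · simp [consF, Fin.val_succ]

theorem cons2F_eq_cons (a b : α) (v : Fin r → α) :
    (cons2F a b v : Fin (r + 2) → α) = Fin.cons a (Fin.cons b v) := by
  funext i
  refine Fin.cases ?_ (fun j => Fin.cases ?_ (fun l => ?_) j) i
  · simp [cons2F]
  · simp [cons2F]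
  · simp [cons2F, Fin.val_succ]

theorem comp_consF {n : ℕ} (f : α → β) (a : α) (v : Fin (n - 1) → α) :
    f ∘ consF a v = consF (f a) (f ∘ v) := by
  funext i
  simp only [consF, comp_apply]
  split <;> rfl

theorem comp_cons2F {n : ℕ} (f : α → β) (a b : α) (v : Fin (n - 2) → α) :
    f ∘ cons2F a b v = cons2F (f a) (f b) (f ∘ v) := by
  funext i
  simp only [cons2F, comp_apply]
  split
  · rfl
  · split <;> rfl

theorem cons_comp_decomposeFin_symm (a : α) (v : Fin r → α) (τ : Perm (Fin r)) :
    (Fin.cons a v : Fin (r + 1) → α) ∘ Perm.decomposeFin.symm (0, τ) =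
      Fin.cons a (v ∘ τ) := by
  funext i
  refine Fin.cases ?_ (fun j => ?_) i <;> simp [Perm.decomposeFin_symm_apply_succ]

theorem cons_cons_comp_swap (a b : α) (v : Fin r → α) :
    (Fin.cons a (Fin.cons b v) : Fin (r + 2) → α) ∘ swap 0 1 = Fin.cons b (Fin.cons a v) := by
  funext i
  refine Fin.cases ?_ (fun j => Fin.cases ?_ (fun l => ?_) j) i
  · simp
  · simp [swap_apply_right]
  · simp [swap_apply_of_ne_of_ne (Fin.succ_ne_zero _) (Fin.succ_succ_ne_one l)]

end Tuples

section BracketHom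

variable {K : Type} [Field K] {n m : ℕ} {L L' : Type} [AddCommGroup L] [Module K L]
  [AddCommGroup L'] [Module K L'] {br : L [⋀^Fin n]→ₗ[K] L} {br' : L' [⋀^Fin n]→ₗ[K] L'}
  {F : L →ₗ[K] L'}

theorem IsBracketHom.map_app1 (hF : IsBracketHom K br br' F) (a : L) (y : Fin (n - 1) → L) :
    F (app1 K br a y) = app1 K br' (F a) (F ∘ y) := by
  rw [app1, hF]
  exact congrArg br' (comp_consF F a y)

theorem IsBracketHom.map_app2 (hF : IsBracketHom K br br' F) (a b : L) (z : Fin (n - 2) → L) :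
    F (app2 K br a b z) = app2 K br' (F a) (F b) (F ∘ z) := by
  rw [app2, hF]
  exact congrArg br' (comp_cons2F F a b z)

theorem IsBracketHom.map_interp (hF : IsBracketHom K br br' F) (ι : Fin m → L) (g : GenT n m) :
    F (interp K br ι g) = interp K br' (F ∘ ι) g := by
  cases g with
  | inl d =>
    show F (app1 K br (app1 K br (br (ι ∘ d.x)) (ι ∘ d.y)) (ι ∘ d.z)) = _
    rw [hF.map_app1, hF.map_app1, hF]
    rfl
  | inr d =>
    show F (app2 K br (br (ι ∘ d.x)) (br (ι ∘ d.y)) (ι ∘ d.z)) = _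
    rw [hF.map_app2, hF, hF]
    rfl

end BracketHom

section WordSigns

variable {K : Type} [Field K] {L : Type} [AddCommGroup L] [Module K L] {r m : ℕ}

theorem app1_smul (br : L [⋀^Fin (r + 1)]→ₗ[K] L) (c : K) (a : L) (y : Fin r → L) :
    app1 K br (c • a) y = c • app1 K br a y := by
  simp only [app1, consF_eq_cons]
  exact br.toMultilinearMap.cons_smul y c a

theorem app1_comp_perm (br : L [⋀^Fin (r + 1)]→ₗ[K] L) (a : L) (y : Fin r → L)
    (τ : Perm (Fin r)) :
    app1 K br a (y ∘ τ) = ((Perm.sign τ : ℤ) : K) • app1 K br a y := by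
  rw [app1, app1, consF_eq_cons, consF_eq_cons, ← cons_comp_decomposeFin_symm,
    AlternatingMap.map_perm_eq_sign_smul, Perm.decomposeFin.symm_sign, if_pos rfl, one_mul]

theorem app2_eq_app1 (br : L [⋀^Fin (r + 2)]→ₗ[K] L) (a b : L) (z : Fin r → L) :
    app2 K br a b z = app1 K br a (Fin.cons b z) := by
  rw [app2, app1, cons2F_eq_cons, consF_eq_cons]

theorem app2_swap (br : L [⋀^Fin (r + 2)]→ₗ[K] L) (a b : L) (z : Fin r → L) :
    app2 K br b a z = -app2 K br a b z := by
  rw [app2, app2, cons2F_eq_cons, cons2F_eq_cons, ← cons_cons_comp_swap,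
    br.map_swap _ zero_ne_one]

theorem app2_smul_left (br : L [⋀^Fin (r + 2)]→ₗ[K] L) (c : K) (a b : L) (z : Fin r → L) :
    app2 K br (c • a) b z = c • app2 K br a b z := by
  rw [app2_eq_app1, app2_eq_app1, app1_smul]

theorem app2_smul_right (br : L [⋀^Fin (r + 2)]→ₗ[K] L) (c : K) (a b : L) (z : Fin r → L) :
    app2 K br a (c • b) z = c • app2 K br a b z := by
  rw [app2_swap, app2_smul_left, app2_swap br b, smul_neg]

theorem app2_comp_perm (br : L [⋀^Fin (r + 2)]→ₗ[K] L) (a b : L) (z : Fin r → L)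
    (τ : Perm (Fin r)) :
    app2 K br a b (z ∘ τ) = ((Perm.sign τ : ℤ) : K) • app2 K br a b z := by
  rw [app2_eq_app1, app2_eq_app1, ← cons_comp_decomposeFin_symm, app1_comp_perm,
    Perm.decomposeFin.symm_sign, if_pos rfl, one_mul]

variable {k : ℕ} (br : L [⋀^Fin (k + 2)]→ₗ[K] L) (ι : Fin m → L)

theorem wG1_comp_perm_x (x : Fin (k + 2) → Fin m) (y z : Fin (k + 1) → Fin m)
    (σ : Perm (Fin (k + 2))) :
    wG1 K br ι (x ∘ σ) y z = ((Perm.sign σ : ℤ) : K) • wG1 K br ι x y z := by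
  rw [wG1, wG1, w1, w1, ← comp_assoc, AlternatingMap.map_perm_eq_sign_smul, app1_smul,
    app1_smul]

theorem wG1_comp_perm_y (x : Fin (k + 2) → Fin m) (y z : Fin (k + 1) → Fin m)
    (τ : Perm (Fin (k + 1))) :
    wG1 K br ι x (y ∘ τ) z = ((Perm.sign τ : ℤ) : K) • wG1 K br ι x y z := by
  rw [wG1, wG1, w1, w1, ← comp_assoc, app1_comp_perm, app1_smul]

theorem wG1_comp_perm_z (x : Fin (k + 2) → Fin m) (y z : Fin (k + 1) → Fin m)
    (τ : Perm (Fin (k + 1))) :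
    wG1 K br ι x y (z ∘ τ) = ((Perm.sign τ : ℤ) : K) • wG1 K br ι x y z := by
  rw [wG1, wG1, w1, w1, ← comp_assoc, app1_comp_perm]

theorem wG2_comp_perm_x (x y : Fin (k + 2) → Fin m) (z : Fin k → Fin m)
    (σ : Perm (Fin (k + 2))) :
    wG2 K br ι (x ∘ σ) y z = ((Perm.sign σ : ℤ) : K) • wG2 K br ι x y z := by
  rw [wG2, wG2, w2, w2, ← comp_assoc, AlternatingMap.map_perm_eq_sign_smul, app2_smul_left]

theorem wG2_comp_perm_y (x y : Fin (k + 2) → Fin m) (z : Fin k → Fin m)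
    (σ : Perm (Fin (k + 2))) :
    wG2 K br ι x (y ∘ σ) z = ((Perm.sign σ : ℤ) : K) • wG2 K br ι x y z := by
  rw [wG2, wG2, w2, w2, ← comp_assoc, AlternatingMap.map_perm_eq_sign_smul, app2_smul_right]

theorem wG2_comp_perm_z (x y : Fin (k + 2) → Fin m) (z : Fin k → Fin m) (τ : Perm (Fin k)) :
    wG2 K br ι x y (z ∘ τ) = ((Perm.sign τ : ℤ) : K) • wG2 K br ι x y z := by
  rw [wG2, wG2, w2, w2, ← comp_assoc, app2_comp_perm]

theorem wG2_swap (x y : Fin (k + 2) → Fin m) (z : Fin k → Fin m) :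
    wG2 K br ι y x z = -wG2 K br ι x y z := by
  rw [wG2, wG2, w2, w2, app2_swap]

end WordSigns

section Generators

variable {n m : ℕ}

attribute [ext] G1D G2D

instance : Finite (G1D n m) :=
  Finite.of_injective (fun d : G1D n m => (d.x, d.y, d.z)) fun d d' h => by
    simp only [Prod.mk.injEq] at h
    ext1 <;> simp [h]

instance : Finite (G2D n m) :=
  Finite.of_injective (fun d : G2D n m => (d.x, d.y, d.z)) fun d d' h => by
    simp only [Prod.mk.injEq] at h
    ext1 <;> simp [h]

instance : Finite (GenT n m) :=
  inferInstanceAs (Finite (G1D n m ⊕ G2D n m))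

theorem G1D.injective_x (d : G1D n m) : Injective d.x :=
  (Sum.elim_injective.1 d.valid).1

theorem G1D.injective_y (d : G1D n m) : Injective d.y :=
  (Sum.elim_injective.1 (Sum.elim_injective.1 d.valid).2.1).1

theorem G1D.injective_z (d : G1D n m) : Injective d.z :=
  (Sum.elim_injective.1 (Sum.elim_injective.1 d.valid).2.1).2.1

theorem G2D.injective_x (d : G2D n m) : Injective d.x :=
  (Sum.elim_injective.1 d.valid).1

theorem G2D.injective_y (d : G2D n m) : Injective d.y :=
  (Sum.elim_injective.1 (Sum.elim_injective.1 d.valid).2.1).1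

theorem G2D.injective_z (d : G2D n m) : Injective d.z :=
  (Sum.elim_injective.1 (Sum.elim_injective.1 d.valid).2.1).2.1

theorem G2D.range_x_ne_range_y {k : ℕ} (d : G2D (k + 1) m) : range d.x ≠ range d.y := by
  intro h
  obtain ⟨j, hj⟩ := h ▸ mem_range_self (f := d.x) 0
  exact (Sum.elim_injective.1 d.valid).2.2 0 (.inl j) hj.symm

def blocks : GenT n m →
    (Set (Fin m) × Set (Fin m) × Set (Fin m)) ⊕ (Sym2 (Set (Fin m)) × Set (Fin m))
  | .inl d => .inl (range d.x, range d.y, range d.z)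
  | .inr d => .inr (s(range d.x, range d.y), range d.z)

variable (n m) in
def blocksSetoid : Setoid (GenT n m) := Setoid.ker blocks

noncomputable instance : Fintype (Quotient (blocksSetoid n m)) := Fintype.ofFinite _

noncomputable def rep (g : GenT n m) : GenT n m :=
  (Quotient.mk (blocksSetoid n m) g).out

theorem blocks_rep (g : GenT n m) : blocks (rep g) = blocks g :=
  Quotient.mk_out (s := blocksSetoid n m) g

end Generators

section Relators

variable (K : Type) [Field K] (n m : ℕ)

def relators : Set (GenT n m →₀ K) :=
  {r : GenT n m →₀ K | ∃ (d d' : G1D n m) (σ : Equiv.Perm (Fin n)),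
      d'.x = d.x ∘ σ ∧ d'.y = d.y ∧ d'.z = d.z ∧
      r = Finsupp.single (Sum.inl d) 1 -
        ((Equiv.Perm.sign σ : ℤ) : K) • Finsupp.single (Sum.inl d') 1} ∪
    {r | ∃ (d d' : G1D n m) (τ : Equiv.Perm (Fin (n - 1))),
      d'.x = d.x ∧ d'.y = d.y ∘ τ ∧ d'.z = d.z ∧
      r = Finsupp.single (Sum.inl d) 1 -
        ((Equiv.Perm.sign τ : ℤ) : K) • Finsupp.single (Sum.inl d') 1} ∪
    {r | ∃ (d d' : G1D n m) (τ : Equiv.Perm (Fin (n - 1))),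
      d'.x = d.x ∧ d'.y = d.y ∧ d'.z = d.z ∘ τ ∧
      r = Finsupp.single (Sum.inl d) 1 -
        ((Equiv.Perm.sign τ : ℤ) : K) • Finsupp.single (Sum.inl d') 1} ∪
    {r | ∃ (d d' : G2D n m) (σ : Equiv.Perm (Fin n)),
      d'.x = d.x ∘ σ ∧ d'.y = d.y ∧ d'.z = d.z ∧
      r = Finsupp.single (Sum.inr d) 1 -
        ((Equiv.Perm.sign σ : ℤ) : K) • Finsupp.single (Sum.inr d') 1} ∪
    {r | ∃ (d d' : G2D n m) (σ : Equiv.Perm (Fin n)),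
      d'.x = d.x ∧ d'.y = d.y ∘ σ ∧ d'.z = d.z ∧
      r = Finsupp.single (Sum.inr d) 1 -
        ((Equiv.Perm.sign σ : ℤ) : K) • Finsupp.single (Sum.inr d') 1} ∪
    {r | ∃ (d d' : G2D n m) (τ : Equiv.Perm (Fin (n - 2))),
      d'.x = d.x ∧ d'.y = d.y ∧ d'.z = d.z ∘ τ ∧
      r = Finsupp.single (Sum.inr d) 1 -
        ((Equiv.Perm.sign τ : ℤ) : K) • Finsupp.single (Sum.inr d') 1} ∪
    {r | ∃ (d d' : G2D n m),
      d'.x = d.y ∧ d'.y = d.x ∧ d'.z = d.z ∧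
      r = Finsupp.single (Sum.inr d) 1 + Finsupp.single (Sum.inr d') 1}

abbrev RelQuot : Type := (GenT n m →₀ K) ⧸ Submodule.span K (relators K n m)

variable {n m}

noncomputable def genClass (g : GenT n m) : RelQuot K n m :=
  Submodule.Quotient.mk (Finsupp.single g 1)

variable {K}

theorem genClass_eq_sign_smul {g g' : GenT n m} {u : ℤˣ}
    (h : Finsupp.single g 1 - ((u : ℤ) : K) • Finsupp.single g' 1 ∈ relators K n m) :
    genClass K g = ((u : ℤ) : K) • genClass K g' := by
  rw [genClass, genClass, ← Submodule.Quotient.mk_smul, Submodule.Quotient.eq]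
  exact Submodule.subset_span h

theorem genClass_eq_neg {g g' : GenT n m}
    (h : Finsupp.single g 1 + Finsupp.single g' 1 ∈ relators K n m) :
    genClass K g = -genClass K g' := by
  rw [eq_neg_iff_add_eq_zero, genClass, genClass, ← Submodule.Quotient.mk_add,
    Submodule.Quotient.mk_eq_zero]
  exact Submodule.subset_span h

theorem genClass_inl_eq_of_perm {d d' : G1D n m} {σ : Perm (Fin n)} {τ ρ : Perm (Fin (n - 1))}
    (hx : d'.x = d.x ∘ σ) (hy : d'.y = d.y ∘ τ) (hz : d'.z = d.z ∘ ρ) :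
    genClass K (.inl d) =
      ((Perm.sign σ : ℤ) : K) • ((Perm.sign τ : ℤ) : K) • ((Perm.sign ρ : ℤ) : K) •
        genClass K (.inl d') := by
  let d₁ : G1D n m := ⟨d.x ∘ σ, d.y, d.z, d.valid.sumElim_comp_perm σ 1 1⟩
  let d₂ : G1D n m := ⟨d.x ∘ σ, d.y ∘ τ, d.z, d.valid.sumElim_comp_perm σ τ 1⟩
  rw [genClass_eq_sign_smul (g' := .inl d₁)
      (.inl (.inl (.inl (.inl (.inl (.inl ⟨d, d₁, σ, rfl, rfl, rfl, rfl⟩)))))),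
    genClass_eq_sign_smul (g' := .inl d₂)
      (.inl (.inl (.inl (.inl (.inl (.inr ⟨d₁, d₂, τ, rfl, rfl, rfl, rfl⟩)))))),
    genClass_eq_sign_smul (g' := .inl d')
      (.inl (.inl (.inl (.inl (.inr ⟨d₂, d', ρ, hx, hy, hz, rfl⟩)))))]

theorem genClass_inr_eq_of_perm {d d' : G2D n m} {σ τ : Perm (Fin n)} {ρ : Perm (Fin (n - 2))}
    (hx : d'.x = d.x ∘ σ) (hy : d'.y = d.y ∘ τ) (hz : d'.z = d.z ∘ ρ) :
    genClass K (.inr d) =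
      ((Perm.sign σ : ℤ) : K) • ((Perm.sign τ : ℤ) : K) • ((Perm.sign ρ : ℤ) : K) •
        genClass K (.inr d') := by
  let d₁ : G2D n m := ⟨d.x ∘ σ, d.y, d.z, d.valid.sumElim_comp_perm σ 1 1⟩
  let d₂ : G2D n m := ⟨d.x ∘ σ, d.y ∘ τ, d.z, d.valid.sumElim_comp_perm σ τ 1⟩
  rw [genClass_eq_sign_smul (g' := .inr d₁)
      (.inl (.inl (.inl (.inr ⟨d, d₁, σ, rfl, rfl, rfl, rfl⟩)))),
    genClass_eq_sign_smul (g' := .inr d₂)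
      (.inl (.inl (.inr ⟨d₁, d₂, τ, rfl, rfl, rfl, rfl⟩))),
    genClass_eq_sign_smul (g' := .inr d') (.inl (.inr ⟨d₂, d', ρ, hx, hy, hz, rfl⟩))]

theorem genClass_inr_eq_neg_of_swap_perm {d d' : G2D n m} {σ τ : Perm (Fin n)}
    {ρ : Perm (Fin (n - 2))} (hx : d'.x = d.y ∘ σ) (hy : d'.y = d.x ∘ τ)
    (hz : d'.z = d.z ∘ ρ) :
    genClass K (.inr d) =
      -(((Perm.sign σ : ℤ) : K) • ((Perm.sign τ : ℤ) : K) • ((Perm.sign ρ : ℤ) : K) •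
        genClass K (.inr d')) := by
  let dsw : G2D n m := ⟨d.y, d.x, d.z, d.valid.sumElim_swap⟩
  rw [genClass_eq_neg (g' := .inr dsw) (.inr ⟨d, dsw, rfl, rfl, rfl, rfl⟩),
    genClass_inr_eq_of_perm (d := dsw) hx hy hz]

end Relators

section Model

variable (K : Type) [Field K] (k m : ℕ) (Q : Type) [AddCommGroup Q] [Module K Q]

/-- Components: letters, brackets `[a₁, …, a_n]` of letters (one coordinate per tuple `a`),
brackets `[[a], b₁, …, b_{n-1}]` (one coordinate per pair `(a, b)`), and a top part in `Q`. -/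
abbrev Model : Type :=
  (Fin m → K) × ((Fin (k + 2) → Fin m) → K) ×
    ((Fin (k + 2) → Fin m) × (Fin (k + 1) → Fin m) → K) × Q

variable {k m}

def letterCoord (j : Fin m) : Model K k m Q →ₗ[K] K :=
  LinearMap.proj j ∘ₗ LinearMap.fst K _ _

def bracketCoord (a : Fin (k + 2) → Fin m) : Model K k m Q →ₗ[K] K :=
  LinearMap.proj a ∘ₗ LinearMap.fst K _ _ ∘ₗ LinearMap.snd K _ _

def nestedCoord (ab : (Fin (k + 2) → Fin m) × (Fin (k + 1) → Fin m)) :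
    Model K k m Q →ₗ[K] K :=
  LinearMap.proj ab ∘ₗ LinearMap.fst K _ _ ∘ₗ LinearMap.snd K _ _ ∘ₗ LinearMap.snd K _ _

def topPart : Model K k m Q →ₗ[K] Q :=
  LinearMap.snd K _ _ ∘ₗ LinearMap.snd K _ _ ∘ₗ LinearMap.snd K _ _

def letter (i : Fin m) : Model K k m Q := (Pi.single i 1, 0, 0, 0)

def rows : GenT (k + 2) m → Fin (k + 2) → (Model K k m Q →ₗ[K] K)
  | .inl d => Fin.cons (nestedCoord K Q (d.x, d.y)) (letterCoord K Q ∘ d.z)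
  | .inr d =>
    Fin.cons (bracketCoord K Q d.x) (Fin.cons (bracketCoord K Q d.y) (letterCoord K Q ∘ d.z))

variable {Q}

noncomputable def bracket (t : GenT (k + 2) m → Q) :
    Model K k m Q [⋀^Fin (k + 2)]→ₗ[K] Model K k m Q :=
  AlternatingMap.prod 0 <|
    AlternatingMap.prod (AlternatingMap.pi fun a => pairingDet (letterCoord K Q ∘ a)) <|
      AlternatingMap.prod
        (AlternatingMap.pi fun ab =>
          pairingDet (Fin.cons (bracketCoord K Q ab.1) (letterCoord K Q ∘ ab.2))) <|
        (Fintype.linearCombination K fun c : Quotient (blocksSetoid (k + 2) m) => t c.out)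
          |>.compAlternatingMap (AlternatingMap.pi fun c => pairingDet (rows K Q c.out))

variable {K} (t : GenT (k + 2) m → Q)

theorem letterCoord_letter (j i : Fin m) :
    letterCoord K Q j (letter K Q i : Model K k m Q) = if j = i then 1 else 0 := by
  simp [letterCoord, letter, Pi.single_apply]

theorem bracketCoord_letter (a : Fin (k + 2) → Fin m) (i : Fin m) :
    bracketCoord K Q a (letter K Q i) = 0 :=
  rfl

theorem nestedCoord_letter (ab : (Fin (k + 2) → Fin m) × (Fin (k + 1) → Fin m)) (i : Fin m) :
    nestedCoord K Q ab (letter K Q i) = 0 :=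
  rfl

theorem letterCoord_bracket (j : Fin m) (v : Fin (k + 2) → Model K k m Q) :
    letterCoord K Q j (bracket K t v) = 0 :=
  rfl

theorem bracketCoord_bracket (a : Fin (k + 2) → Fin m) (v : Fin (k + 2) → Model K k m Q) :
    bracketCoord K Q a (bracket K t v) = pairingDet (letterCoord K Q ∘ a) v :=
  rfl

theorem nestedCoord_bracket (ab : (Fin (k + 2) → Fin m) × (Fin (k + 1) → Fin m))
    (v : Fin (k + 2) → Model K k m Q) :
    nestedCoord K Q ab (bracket K t v) =
      pairingDet (Fin.cons (bracketCoord K Q ab.1) (letterCoord K Q ∘ ab.2)) v :=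
  rfl

theorem topPart_bracket (v : Fin (k + 2) → Model K k m Q) :
    topPart K Q (bracket K t v) =
      ∑ c : Quotient (blocksSetoid (k + 2) m), pairingDet (rows K Q c.out) v • t c.out := by
  simp [topPart, bracket, Fintype.linearCombination_apply]

theorem pairingDet_letterCoord_letter {r : ℕ} (a x : Fin r → Fin m) :
    pairingDet (letterCoord K Q ∘ a) (letter K Q ∘ x : Fin r → Model K k m Q) =
      incidenceDet K a x := by
  simp [pairingDet_apply, incidenceDet, letterCoord_letter]

theorem bracketCoord_bracket_letter (a x : Fin (k + 2) → Fin m) :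
    bracketCoord K Q a (bracket K t (letter K Q ∘ x)) = incidenceDet K a x :=
  (bracketCoord_bracket t a _).trans (pairingDet_letterCoord_letter a x)

theorem nestedCoord_bracket_letter (ab : (Fin (k + 2) → Fin m) × (Fin (k + 1) → Fin m))
    (x : Fin (k + 2) → Fin m) : nestedCoord K Q ab (bracket K t (letter K Q ∘ x)) = 0 :=
  pairingDet_eq_zero_of_row _ _ 0 fun _ => bracketCoord_letter _ _

theorem bracketCoord_bracket_cons_bracket (a : Fin (k + 2) → Fin m)
    (u : Fin (k + 2) → Model K k m Q) (y : Fin (k + 1) → Fin m) :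
    bracketCoord K Q a (bracket K t (Fin.cons (bracket K t u) (letter K Q ∘ y))) = 0 :=
  pairingDet_eq_zero_of_col _ _ 0 fun _ => letterCoord_bracket t _ _

theorem nestedCoord_bracket_cons_bracket_letter (a x : Fin (k + 2) → Fin m)
    (b y : Fin (k + 1) → Fin m) :
    nestedCoord K Q (a, b)
        (bracket K t (Fin.cons (bracket K t (letter K Q ∘ x)) (letter K Q ∘ y))) =
      incidenceDet K a x * incidenceDet K b y := by
  rw [nestedCoord_bracket, pairingDet_cons_cons _ _ _ _ fun _ => bracketCoord_letter _ _,
    bracketCoord_bracket_letter, pairingDet_letterCoord_letter]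

noncomputable def outerArgs : GenT (k + 2) m → Fin (k + 2) → Model K k m Q
  | .inl d =>
    Fin.cons (bracket K t (Fin.cons (bracket K t (letter K Q ∘ d.x)) (letter K Q ∘ d.y)))
      (letter K Q ∘ d.z)
  | .inr d =>
    Fin.cons (bracket K t (letter K Q ∘ d.x))
      (Fin.cons (bracket K t (letter K Q ∘ d.y)) (letter K Q ∘ d.z))

theorem interp_bracket_letter (g : GenT (k + 2) m) :
    interp K (bracket K t) (letter K Q) g = bracket K t (outerArgs t g) := by
  cases g with
  | inl d => simp only [interp, wG1, w1, app1, consF_eq_cons, outerArgs]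
  | inr d => simp only [interp, wG2, w2, app2, cons2F_eq_cons, outerArgs]

theorem pairingDet_rows_inl_outerArgs_inl (d' d : G1D (k + 2) m) :
    pairingDet (rows K Q (.inl d')) (outerArgs t (.inl d)) =
      incidenceDet K d'.x d.x * incidenceDet K d'.y d.y * incidenceDet K d'.z d.z := by
  rw [rows, outerArgs, pairingDet_cons_cons _ _ _ _ fun _ => nestedCoord_letter _ _,
    nestedCoord_bracket_cons_bracket_letter, pairingDet_letterCoord_letter]

theorem pairingDet_rows_inr_outerArgs_inr (d' d : G2D (k + 2) m) :
    pairingDet (rows K Q (.inr d')) (outerArgs t (.inr d)) =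
      (incidenceDet K d'.x d.x * incidenceDet K d'.y d.y -
        incidenceDet K d'.x d.y * incidenceDet K d'.y d.x) * incidenceDet K d'.z d.z := by
  rw [rows, outerArgs, pairingDet_cons_cons_cons_cons _ _ _ _ _ _
    (fun _ => bracketCoord_letter _ _) (fun _ => bracketCoord_letter _ _),
    bracketCoord_bracket_letter, bracketCoord_bracket_letter, bracketCoord_bracket_letter,
    bracketCoord_bracket_letter, pairingDet_letterCoord_letter]

theorem pairingDet_rows_inr_outerArgs_inl (d' : G2D (k + 2) m) (d : G1D (k + 2) m) :
    pairingDet (rows K Q (.inr d')) (outerArgs t (.inl d)) = 0 := by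
  rw [rows, outerArgs, pairingDet_cons_cons _ _ _ _ fun _ => bracketCoord_letter _ _,
    bracketCoord_bracket_cons_bracket, zero_mul]

theorem pairingDet_rows_inl_outerArgs_inr (d' : G1D (k + 2) m) (d : G2D (k + 2) m) :
    pairingDet (rows K Q (.inl d')) (outerArgs t (.inr d)) = 0 := by
  rw [rows, outerArgs, pairingDet_cons_cons _ _ _ _
    (Fin.cases (nestedCoord_bracket_letter t _ _) fun _ => nestedCoord_letter _ _),
    nestedCoord_bracket_letter, zero_mul]

theorem blocks_eq_of_pairingDet_ne_zero {g' g : GenT (k + 2) m}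
    (h : pairingDet (rows K Q g') (outerArgs t g) ≠ 0) : blocks g' = blocks g := by
  rcases g' with d' | d' <;> rcases g with d | d
  · rw [pairingDet_rows_inl_outerArgs_inl] at h
    simp only [mul_ne_zero_iff] at h
    simp only [blocks, range_eq_of_incidenceDet_ne_zero h.1.1,
      range_eq_of_incidenceDet_ne_zero h.1.2, range_eq_of_incidenceDet_ne_zero h.2]
  · exact absurd (pairingDet_rows_inl_outerArgs_inr t d' d) h
  · exact absurd (pairingDet_rows_inr_outerArgs_inl t d' d) h
  · rw [pairingDet_rows_inr_outerArgs_inr] at h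
    obtain ⟨hxy, hz⟩ := mul_ne_zero_iff.1 h
    simp only [blocks, range_eq_of_incidenceDet_ne_zero hz, Sum.inr.injEq, Prod.mk.injEq,
      and_true, Sym2.eq_iff]
    rcases eq_or_ne (incidenceDet K d'.x d.x * incidenceDet K d'.y d.y) 0 with hst | hst
    · rw [hst, zero_sub, neg_ne_zero, mul_ne_zero_iff] at hxy
      exact .inr ⟨range_eq_of_incidenceDet_ne_zero hxy.1,
        range_eq_of_incidenceDet_ne_zero hxy.2⟩
    · rw [mul_ne_zero_iff] at hst
      exact .inl ⟨range_eq_of_incidenceDet_ne_zero hst.1,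
        range_eq_of_incidenceDet_ne_zero hst.2⟩

theorem topPart_interp (g : GenT (k + 2) m) :
    topPart K Q (interp K (bracket K t) (letter K Q) g) =
      pairingDet (rows K Q (rep g)) (outerArgs t g) • t (rep g) := by
  rw [interp_bracket_letter, topPart_bracket, Finset.sum_eq_single ⟦g⟧ _ (by simp)]
  · rfl
  intro c _ hc
  rw [← c.out_eq] at hc
  by_contra h
  exact hc (Quotient.sound (blocks_eq_of_pairingDet_ne_zero t (left_ne_zero_of_smul h)))

end Model

section Kernel

variable {K : Type} [Field K] {k m : ℕ}

theorem genClass_eq_pairingDet_smul {g' g : GenT (k + 2) m} (h : blocks g' = blocks g) :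
    genClass K g = pairingDet (rows K _ g') (outerArgs (genClass K) g) • genClass K g' := by
  rcases g' with d' | d' <;> rcases g with d | d <;>
    simp only [blocks, Sum.inl.injEq, Sum.inr.injEq, Prod.mk.injEq, reduceCtorEq] at h
  · obtain ⟨σ, hσ⟩ := exists_perm_of_range_eq d.injective_x h.1
    obtain ⟨τ, hτ⟩ := exists_perm_of_range_eq d.injective_y h.2.1
    obtain ⟨ρ, hρ⟩ := exists_perm_of_range_eq d.injective_z h.2.2
    rw [pairingDet_rows_inl_outerArgs_inl, hσ, hτ, hρ, incidenceDet_comp_perm d.injective_x,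
      incidenceDet_comp_perm d.injective_y, incidenceDet_comp_perm d.injective_z, mul_smul,
      mul_smul]
    exact genClass_inl_eq_of_perm hσ hτ hρ
  · obtain ⟨hxy, hz⟩ := h
    obtain ⟨ρ, hρ⟩ := exists_perm_of_range_eq d.injective_z hz
    rw [pairingDet_rows_inr_outerArgs_inr, hρ, incidenceDet_comp_perm d.injective_z]
    rcases Sym2.eq_iff.1 hxy with ⟨hx, hy⟩ | ⟨hx, hy⟩
    · obtain ⟨σ, hσ⟩ := exists_perm_of_range_eq d.injective_x hx
      obtain ⟨τ, hτ⟩ := exists_perm_of_range_eq d.injective_y hy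
      have hcross : incidenceDet K d'.x d.y = 0 := by
        by_contra h'
        exact d.range_x_ne_range_y (hx.symm.trans (range_eq_of_incidenceDet_ne_zero h'))
      rw [hcross, hσ, hτ, incidenceDet_comp_perm d.injective_x,
        incidenceDet_comp_perm d.injective_y, zero_mul, sub_zero, mul_smul, mul_smul]
      exact genClass_inr_eq_of_perm hσ hτ hρ
    · obtain ⟨σ, hσ⟩ := exists_perm_of_range_eq d.injective_y hx
      obtain ⟨τ, hτ⟩ := exists_perm_of_range_eq d.injective_x hy
      have hcross : incidenceDet K d'.x d.x = 0 := by
        by_contra h'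
        exact d.range_x_ne_range_y ((range_eq_of_incidenceDet_ne_zero h').symm.trans hx)
      rw [hcross, hσ, hτ, incidenceDet_comp_perm d.injective_y,
        incidenceDet_comp_perm d.injective_x, zero_mul, zero_sub, neg_mul, neg_smul, mul_smul,
        mul_smul]
      exact genClass_inr_eq_neg_of_swap_perm hσ hτ hρ

theorem topPart_interp_genClass (g : GenT (k + 2) m) :
    topPart K _ (interp K (bracket K (genClass K)) (letter K _) g) = genClass K g := by
  rw [topPart_interp, ← genClass_eq_pairingDet_smul (blocks_rep g)]

variable {A : Type} [AddCommGroup A] [Module K A]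

theorem toW_single {n : ℕ} (br : A [⋀^Fin n]→ₗ[K] A) (ι : Fin m → A) (g : GenT n m) :
    toW K br ι (Finsupp.single g 1) = interp K br ι g := by
  rw [toW, Finsupp.linearCombination_single, one_smul]

theorem ker_toW_le_span_relators (br : A [⋀^Fin (k + 2)]→ₗ[K] A) (ι : Fin m → A)
    (hfree : IsFreeAnti K br ι) :
    LinearMap.ker (toW K br ι) ≤ Submodule.span K (relators K (k + 2) m) := by
  obtain ⟨F, ⟨hF, hFι⟩, -⟩ := hfree _ (bracket K (genClass K)) (letter K _)
  have hretract :
      (topPart K _ ∘ₗ F) ∘ₗ toW K br ι = (Submodule.span K (relators K _ m)).mkQ := by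
    ext g
    simp only [LinearMap.comp_apply, Finsupp.lsingle_apply]
    rw [toW_single, hF.map_interp, show F ∘ ι = letter K _ from funext hFι,
      topPart_interp_genClass]
    rfl
  calc LinearMap.ker (toW K br ι) ≤ LinearMap.ker ((topPart K _ ∘ₗ F) ∘ₗ toW K br ι) :=
        LinearMap.ker_le_ker_comp _ _
    _ = _ := by rw [hretract, Submodule.ker_mkQ]

theorem single_sub_sign_smul_single_mem_ker {n : ℕ} {br : A [⋀^Fin n]→ₗ[K] A}
    {ι : Fin m → A} {g g' : GenT n m} {u : ℤˣ}
    (h : interp K br ι g' = ((u : ℤ) : K) • interp K br ι g) :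
    Finsupp.single g 1 - ((u : ℤ) : K) • Finsupp.single g' 1 ∈
      LinearMap.ker (toW K br ι) := by
  rw [LinearMap.mem_ker, map_sub, map_smul, toW_single, toW_single, h, smul_smul, ← Int.cast_mul,
    ← Units.val_mul, Int.units_mul_self, Units.val_one, Int.cast_one, one_smul, sub_self]

theorem single_add_single_mem_ker {n : ℕ} {br : A [⋀^Fin n]→ₗ[K] A} {ι : Fin m → A}
    {g g' : GenT n m} (h : interp K br ι g' = -interp K br ι g) :
    Finsupp.single g 1 + Finsupp.single g' 1 ∈ LinearMap.ker (toW K br ι) := by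
  rw [LinearMap.mem_ker, map_add, toW_single, toW_single, h, add_neg_cancel]

theorem relators_subset_ker (br : A [⋀^Fin (k + 2)]→ₗ[K] A) (ι : Fin m → A) :
    relators K (k + 2) m ⊆ LinearMap.ker (toW K br ι) := by
  rintro r ((((((⟨d, d', σ, hx, hy, hz, rfl⟩ | ⟨d, d', σ, hx, hy, hz, rfl⟩) |
    ⟨d, d', σ, hx, hy, hz, rfl⟩) | ⟨d, d', σ, hx, hy, hz, rfl⟩) |
    ⟨d, d', σ, hx, hy, hz, rfl⟩) | ⟨d, d', σ, hx, hy, hz, rfl⟩) |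
    ⟨d, d', hx, hy, hz, rfl⟩)
  · exact single_sub_sign_smul_single_mem_ker (by rw [interp, interp, hx, hy, hz, wG1_comp_perm_x])
  · exact single_sub_sign_smul_single_mem_ker (by rw [interp, interp, hx, hy, hz, wG1_comp_perm_y])
  · exact single_sub_sign_smul_single_mem_ker (by rw [interp, interp, hx, hy, hz, wG1_comp_perm_z])
  · exact single_sub_sign_smul_single_mem_ker (by rw [interp, interp, hx, hy, hz, wG2_comp_perm_x])
  · exact single_sub_sign_smul_single_mem_ker (by rw [interp, interp, hx, hy, hz, wG2_comp_perm_y])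
  · exact single_sub_sign_smul_single_mem_ker (by rw [interp, interp, hx, hy, hz, wG2_comp_perm_z])
  · exact single_add_single_mem_ker (by rw [interp, interp, hx, hy, hz, wG2_swap])

end Kernel

end LAnKe
open LAnKe in
theorem statement_12_general (K : Type) [Field K] (n m : ℕ) (hn : 2 ≤ n)
    (A : Type) [AddCommGroup A] [Module K A]
    (br : AlternatingMap K A A (Fin n)) (ι : Fin m → A)
    (hfreeA : IsFreeAnti K br ι) :
    LinearMap.ker (toW K br ι) =
      Submodule.span K
        ({r : GenT n m →₀ K | ∃ (d d' : G1D n m) (σ : Equiv.Perm (Fin n)),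
            d'.x = d.x ∘ σ ∧ d'.y = d.y ∧ d'.z = d.z ∧
            r = Finsupp.single (Sum.inl d) 1 -
              ((Equiv.Perm.sign σ : ℤ) : K) • Finsupp.single (Sum.inl d') 1} ∪
          {r | ∃ (d d' : G1D n m) (τ : Equiv.Perm (Fin (n - 1))),
            d'.x = d.x ∧ d'.y = d.y ∘ τ ∧ d'.z = d.z ∧
            r = Finsupp.single (Sum.inl d) 1 -
              ((Equiv.Perm.sign τ : ℤ) : K) • Finsupp.single (Sum.inl d') 1} ∪
          {r | ∃ (d d' : G1D n m) (τ : Equiv.Perm (Fin (n - 1))),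
            d'.x = d.x ∧ d'.y = d.y ∧ d'.z = d.z ∘ τ ∧
            r = Finsupp.single (Sum.inl d) 1 -
              ((Equiv.Perm.sign τ : ℤ) : K) • Finsupp.single (Sum.inl d') 1} ∪
          {r | ∃ (d d' : G2D n m) (σ : Equiv.Perm (Fin n)),
            d'.x = d.x ∘ σ ∧ d'.y = d.y ∧ d'.z = d.z ∧
            r = Finsupp.single (Sum.inr d) 1 -
              ((Equiv.Perm.sign σ : ℤ) : K) • Finsupp.single (Sum.inr d') 1} ∪
          {r | ∃ (d d' : G2D n m) (σ : Equiv.Perm (Fin n)),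
            d'.x = d.x ∧ d'.y = d.y ∘ σ ∧ d'.z = d.z ∧
            r = Finsupp.single (Sum.inr d) 1 -
              ((Equiv.Perm.sign σ : ℤ) : K) • Finsupp.single (Sum.inr d') 1} ∪
          {r | ∃ (d d' : G2D n m) (τ : Equiv.Perm (Fin (n - 2))),
            d'.x = d.x ∧ d'.y = d.y ∧ d'.z = d.z ∘ τ ∧
            r = Finsupp.single (Sum.inr d) 1 -
              ((Equiv.Perm.sign τ : ℤ) : K) • Finsupp.single (Sum.inr d') 1} ∪
          {r | ∃ (d d' : G2D n m),
            d'.x = d.y ∧ d'.y = d.x ∧ d'.z = d.z ∧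
            r = Finsupp.single (Sum.inr d) 1 + Finsupp.single (Sum.inr d') 1}) := by
  obtain ⟨k, rfl⟩ := Nat.exists_eq_add_of_le' hn
  exact le_antisymm (ker_toW_le_span_relators br ι hfreeA)
    (Submodule.span_le.2 (relators_subset_ker br ι))

open LAnKe in
/-- Lemma 5.2.  Let `n ≥ 2` and `m = 3n-2`.  The subspace of `W`
consisting of all relations satisfied by the generators (G1) and (G2) — that is, the kernel
of the canonical map from the free vector space on the bracketed permutations to the free
anticommutative `n`-ary algebra — is spanned by the seven families of elements listed in
Lemma 5.2: antisymmetry in the `x`'s, `y`'s and `z`'s of (G1), antisymmetry in the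
`x`'s, `y`'s and `z`'s of (G2), and the swap `(G2) + [[y],[x],z]`. -/
theorem statement_12 (K : Type) [Field K] [CharZero K] (n m : ℕ) (hn : 2 ≤ n)
    (hm : m = 3 * n - 2) (A : Type) [AddCommGroup A] [Module K A]
    (br : AlternatingMap K A A (Fin n)) (ι : Fin m → A)
    (hfreeA : IsFreeAnti K br ι) :
    LinearMap.ker (toW K br ι) =
      Submodule.span K
        ({r : GenT n m →₀ K | ∃ (d d' : G1D n m) (σ : Equiv.Perm (Fin n)),
            d'.x = d.x ∘ σ ∧ d'.y = d.y ∧ d'.z = d.z ∧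
            r = Finsupp.single (Sum.inl d) 1 -
              ((Equiv.Perm.sign σ : ℤ) : K) • Finsupp.single (Sum.inl d') 1} ∪
          {r | ∃ (d d' : G1D n m) (τ : Equiv.Perm (Fin (n - 1))),
            d'.x = d.x ∧ d'.y = d.y ∘ τ ∧ d'.z = d.z ∧
            r = Finsupp.single (Sum.inl d) 1 -
              ((Equiv.Perm.sign τ : ℤ) : K) • Finsupp.single (Sum.inl d') 1} ∪
          {r | ∃ (d d' : G1D n m) (τ : Equiv.Perm (Fin (n - 1))),
            d'.x = d.x ∧ d'.y = d.y ∧ d'.z = d.z ∘ τ ∧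
            r = Finsupp.single (Sum.inl d) 1 -
              ((Equiv.Perm.sign τ : ℤ) : K) • Finsupp.single (Sum.inl d') 1} ∪
          {r | ∃ (d d' : G2D n m) (σ : Equiv.Perm (Fin n)),
            d'.x = d.x ∘ σ ∧ d'.y = d.y ∧ d'.z = d.z ∧
            r = Finsupp.single (Sum.inr d) 1 -
              ((Equiv.Perm.sign σ : ℤ) : K) • Finsupp.single (Sum.inr d') 1} ∪
          {r | ∃ (d d' : G2D n m) (σ : Equiv.Perm (Fin n)),
            d'.x = d.x ∧ d'.y = d.y ∘ σ ∧ d'.z = d.z ∧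
            r = Finsupp.single (Sum.inr d) 1 -
              ((Equiv.Perm.sign σ : ℤ) : K) • Finsupp.single (Sum.inr d') 1} ∪
          {r | ∃ (d d' : G2D n m) (τ : Equiv.Perm (Fin (n - 2))),
            d'.x = d.x ∧ d'.y = d.y ∧ d'.z = d.z ∘ τ ∧
            r = Finsupp.single (Sum.inr d) 1 -
              ((Equiv.Perm.sign τ : ℤ) : K) • Finsupp.single (Sum.inr d') 1} ∪
          {r | ∃ (d d' : G2D n m),
            d'.x = d.y ∧ d'.y = d.x ∧ d'.z = d.z ∧
            r = Finsupp.single (Sum.inr d) 1 + Finsupp.single (Sum.inr d') 1}) :=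
  statement_12_general K n m hn A br ι hfreeA
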